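/- arXiv:1711.06797 — 4 statements merged into one kernel-verified Lean document; each statement's English description precedes it below -/
import Mathlib

section
/- Let E_1,...,E_n be events in a probability space and G a graph on [n] such that Pr[E_i | ∩_{j∈J} ¬E_j] ≤ p_i for every i and every J ⊆ [n]∖Γ⁺(i) with Pr[∩_{j∈J} ¬E_j] > 0. Define P̆_A = Pr[∩_{i∈A} ¬E_i]. Then for each a ∈ A ⊆ [n] with P̆_{A∖Γ⁺(a)} > 0, one has P̆_A ≥ P̆_{A∖{a}} − p_a · P̆_{A∖Γ⁺(a)}. -/
open Finset MeasureTheory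

/-- `I` is an independent set of `G`. -/
def Indep {n : ℕ} (G : SimpleGraph (Fin n)) (I : Finset (Fin n)) : Prop :=
  ∀ i ∈ I, ∀ j ∈ I, ¬ G.Adj i j

instance {n : ℕ} (G : SimpleGraph (Fin n)) [DecidableRel G.Adj] (I : Finset (Fin n)) :
    Decidable (Indep G I) := by unfold Indep; infer_instance

/-- Closed neighborhood `Γ⁺(a)`. -/
def Gp {n : ℕ} (G : SimpleGraph (Fin n)) [DecidableRel G.Adj] (a : Fin n) : Finset (Fin n) :=
  insert a (G.neighborFinset a)

/-- Shearer coefficient `q̆_S`. -/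
def qb {n : ℕ} (G : SimpleGraph (Fin n)) [DecidableRel G.Adj] (p : Fin n → ℝ)
    (S : Finset (Fin n)) : ℝ :=
  ∑ I ∈ S.powerset.filter (fun I => Indep G I), (-1 : ℝ) ^ I.card * ∏ i ∈ I, p i

/-- Cluster-expansion polynomial `Y_S`. -/
def Yf {n : ℕ} (G : SimpleGraph (Fin n)) [DecidableRel G.Adj] (y : Fin n → ℝ)
    (S : Finset (Fin n)) : ℝ :=
  ∑ I ∈ S.powerset.filter (fun I => Indep G I), ∏ i ∈ I, y i

/-!
Split `⋂_{A∖a} E_iᶜ` along `E_a`. Its part outside `E_a` is `⋂_A E_iᶜ`; its part inside `E_a` lies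
in `E_a ∩ ⋂_{A∖Γ⁺(a)} E_iᶜ`, because `A ∖ Γ⁺(a) ⊆ A ∖ {a}`, and the dependency hypothesis for
`J = A ∖ Γ⁺(a)` bounds that by `p_a · P̆_{A∖Γ⁺(a)}`. All sets involved lie in `⋂_{A∖Γ⁺(a)} E_iᶜ`,
whose measure is finite, so the split holds in real numbers by subadditivity.
-/

open scoped ENNReal

lemma sdiff_Gp_subset_erase {n : ℕ} (G : SimpleGraph (Fin n)) [DecidableRel G.Adj]
    (A : Finset (Fin n)) (a : Fin n) : A \ Gp G a ⊆ A.erase a := fun i hi =>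
  mem_erase.2 ⟨fun h => (mem_sdiff.1 hi).2 (h ▸ mem_insert_self i _), (mem_sdiff.1 hi).1⟩

lemma biInter_compl_eq_biInter_erase_diff {ι α : Type*} [DecidableEq ι] (E : ι → Set α)
    {A : Finset ι} {a : ι} (ha : a ∈ A) :
    ⋂ i ∈ A, (E i)ᶜ = (⋂ i ∈ A.erase a, (E i)ᶜ) \ E a := by
  conv_lhs => rw [← insert_erase ha]
  rw [set_biInter_insert, Set.inter_comm, Set.sdiff_eq]

lemma toReal_measure_sub_le_toReal_measure_diff {Ω : Type*} [MeasurableSpace Ω]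
    {μ : Measure Ω} {S N F : Set Ω} (hSN : S ⊆ N) (hN : μ N ≠ ∞) :
    (μ S).toReal - (μ (F ∩ N)).toReal ≤ (μ (S \ F)).toReal := by
  have hcover : μ S ≤ μ (F ∩ N) + μ (S \ F) :=
    (measure_mono fun x hx => (em (x ∈ F)).imp (fun hF => ⟨hF, hSN hx⟩) (fun hF => ⟨hx, hF⟩)).trans
      (measure_union_le _ _)
  have hFN : μ (F ∩ N) ≠ ∞ := measure_ne_top_of_subset Set.inter_subset_right hN
  have hSF : μ (S \ F) ≠ ∞ := measure_ne_top_of_subset (Set.sdiff_subset.trans hSN) hN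
  have := ENNReal.toReal_mono (ENNReal.add_ne_top.2 ⟨hFN, hSF⟩) hcover
  rw [ENNReal.toReal_add hFN hSF] at this
  linarith

theorem fundamental_inequality_general {Ω : Type*} [MeasurableSpace Ω] (μ : Measure Ω)
    {n : ℕ} (G : SimpleGraph (Fin n)) [DecidableRel G.Adj]
    (E : Fin n → Set Ω) (p : Fin n → ℝ)
    (hdep : ∀ i, ∀ J : Finset (Fin n), J ⊆ Finset.univ \ Gp G i →
      0 < (μ (⋂ j ∈ J, (E j)ᶜ)).toReal →
      (μ (E i ∩ ⋂ j ∈ J, (E j)ᶜ)).toReal / (μ (⋂ j ∈ J, (E j)ᶜ)).toReal ≤ p i)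
    (A : Finset (Fin n)) (a : Fin n) (ha : a ∈ A)
    (hpos : 0 < (μ (⋂ i ∈ A \ Gp G a, (E i)ᶜ)).toReal) :
    (μ (⋂ i ∈ A, (E i)ᶜ)).toReal ≥
      (μ (⋂ i ∈ A.erase a, (E i)ᶜ)).toReal -
        p a * (μ (⋂ i ∈ A \ Gp G a, (E i)ᶜ)).toReal := by
  set N := ⋂ i ∈ A \ Gp G a, (E i)ᶜ
  have hcond : (μ (E a ∩ N)).toReal ≤ p a * (μ N).toReal :=
    (div_le_iff₀ hpos).1 (hdep a _ (Finset.sdiff_subset_sdiff (subset_univ A) subset_rfl) hpos)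
  have hloss := toReal_measure_sub_le_toReal_measure_diff (S := ⋂ i ∈ A.erase a, (E i)ᶜ) (N := N)
    (F := E a) (Set.biInter_subset_biInter_left (sdiff_Gp_subset_erase G A a))
    (ENNReal.toReal_pos_iff.1 hpos).2.ne
  rw [biInter_compl_eq_biInter_erase_diff E ha, ge_iff_le]
  linarith

theorem fundamental_inequality {Ω : Type*} [MeasurableSpace Ω] (μ : Measure Ω) [IsProbabilityMeasure μ]
    {n : ℕ} (G : SimpleGraph (Fin n)) [DecidableRel G.Adj]
    (E : Fin n → Set Ω) (hE : ∀ i, MeasurableSet (E i)) (p : Fin n → ℝ)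
    (hp : ∀ i, p i ∈ Set.Icc (0 : ℝ) 1)
    (hdep : ∀ i, ∀ J : Finset (Fin n), J ⊆ Finset.univ \ Gp G i →
      0 < (μ (⋂ j ∈ J, (E j)ᶜ)).toReal →
      (μ (E i ∩ ⋂ j ∈ J, (E j)ᶜ)).toReal / (μ (⋂ j ∈ J, (E j)ᶜ)).toReal ≤ p i)
    (A : Finset (Fin n)) (a : Fin n) (ha : a ∈ A)
    (hpos : 0 < (μ (⋂ i ∈ A \ Gp G a, (E i)ᶜ)).toReal) :
    (μ (⋂ i ∈ A, (E i)ᶜ)).toReal ≥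
      (μ (⋂ i ∈ A.erase a, (E i)ᶜ)).toReal -
        p a * (μ (⋂ i ∈ A \ Gp G a, (E i)ᶜ)).toReal :=
  fundamental_inequality_general μ G E p hdep A a ha hpos
end

section
/- (Lopsided Shearer's Lemma) Let E_1,...,E_n be events and G a graph on [n] satisfying the lopsidependency condition Pr[E_i | ∩_{j∈J} ¬E_j] ≤ p_i for all i and all J ⊆ [n]∖Γ⁺(i) (whenever the conditioning event has positive probability). Define q̆_S = Σ_{I⊆S, I independent} (-1)^{|I|} ∏_{i∈I} p_i. If q̆_S ≥ 0 for all S ⊆ [n], then for every A ⊆ [n], Pr[∩_{j∈A} ¬E_j] ≥ q̆_A. -/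
open Finset MeasureTheory

/-!
Write `P S` for the probability that no event of `S` occurs. For `i ∈ S`, both `q̆` and `P` obey a
deletion recurrence: `q̆_S = q̆_{S∖i} - p_i q̆_{S∖Γ⁺(i)}` exactly, and
`P_S ≥ P_{S∖i} - p_i P_{S∖Γ⁺(i)}` by the lopsidependency condition. Given `q̆ ≥ 0`, induction on `S`
shows that `P_S / q̆_S` increases along inclusion, in the cross-multiplied form `q̆_S P_T ≤ q̆_T P_S`
for `T ⊆ S`; taking `T = ∅` gives `q̆_S ≤ P_S`.
-/

section DeletionRecurrence

variable {α : Type*} [DecidableEq α]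

theorem Finset.sdiff_subset_erase_of_mem {s t : Finset α} {a : α} (ha : a ∈ t) :
    s \ t ⊆ s.erase a := by
  grind

theorem mul_le_mul_of_deletion_recurrence (q P : Finset α → ℝ) (c : α → ℝ) (K : α → Finset α)
    (hc : ∀ i, 0 ≤ c i) (hK : ∀ i, i ∈ K i) (hq : ∀ S, 0 ≤ q S) (hP : ∀ S, 0 ≤ P S)
    (hq_rec : ∀ S, ∀ i ∈ S, q S = q (S.erase i) - c i * q (S \ K i))
    (hP_rec : ∀ S, ∀ i ∈ S, P (S.erase i) - c i * P (S \ K i) ≤ P S)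
    {T S : Finset α} (hTS : T ⊆ S) : q S * P T ≤ q T * P S := by
  induction S using Finset.strongInduction generalizing T with
  | H S ih =>
  obtain rfl | hTS := hTS.eq_or_ssubset
  · rw [mul_comm]
  obtain ⟨i, hiS, hiT⟩ := exists_of_ssubset hTS
  set S' := S.erase i
  have hS' : S' ⊂ S := erase_ssubset hiS
  have hN : S \ K i ⊆ S' := sdiff_subset_erase_of_mem (hK i)
  have hstep : q S * P S' ≤ q S' * P S := by
    have h := ih S' hS' hN
    calc q S * P S' = q S' * P S' - c i * (q (S \ K i) * P S') := by rw [hq_rec S i hiS]; ring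
      _ ≤ q S' * P S' - c i * (q S' * P (S \ K i)) := by gcongr; exact hc i
      _ = q S' * (P S' - c i * P (S \ K i)) := by ring
      _ ≤ q S' * P S := by gcongr; exacts [hq S', hP_rec S i hiS]
  have hT := ih S' hS' (subset_erase.2 ⟨hTS.subset, hiT⟩)
  obtain hS'0 | hS'pos := (hq S').eq_or_lt
  · have hS0 : q S = 0 :=
      le_antisymm (by nlinarith [hq_rec S i hiS, hc i, hq (S \ K i)]) (hq S)
    rw [hS0, zero_mul]
    exact mul_nonneg (hq T) (hP S)
  refine le_of_mul_le_mul_left ?_ hS'pos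
  calc q S' * (q S * P T) = q S * (q S' * P T) := by ring
    _ ≤ q S * (q T * P S') := by gcongr; exact hq S
    _ = q T * (q S * P S') := by ring
    _ ≤ q T * (q S' * P S) := by gcongr; exact hq T
    _ = q S' * (q T * P S) := by ring

end DeletionRecurrence

section Shearer

variable {n : ℕ} (G : SimpleGraph (Fin n)) [DecidableRel G.Adj]

theorem mem_Gp_self (a : Fin n) : a ∈ Gp G a := mem_insert_self a _

theorem indep_insert_iff {t : Finset (Fin n)} {i : Fin n} (hi : i ∉ t) :
    Indep G (insert i t) ↔ Indep G t ∧ Disjoint t (Gp G i) := by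
  rw [Gp, disjoint_insert_right, Indep, Indep]
  simp only [forall_mem_insert, disjoint_left, SimpleGraph.mem_neighborFinset, G.irrefl,
    not_false_eq_true, true_and, hi]
  exact ⟨fun ⟨hit, ht⟩ => ⟨fun a ha => (ht a ha).2, hit⟩,
    fun ⟨ht, hit⟩ => ⟨hit, fun a ha => ⟨fun h => hit a ha h.symm, ht a ha⟩⟩⟩

theorem qb_eq_sub_mul_qb_sdiff_Gp (p : Fin n → ℝ) {S : Finset (Fin n)} {i : Fin n} (hi : i ∈ S) :
    qb G p S = qb G p (S.erase i) - p i * qb G p (S \ Gp G i) := by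
  have hpow : {t ∈ (S.erase i).powerset | Indep G (insert i t)} =
      {t ∈ (S \ Gp G i).powerset | Indep G t} := by
    ext t
    simp only [mem_filter, mem_powerset, subset_erase, subset_sdiff]
    constructor
    · rintro ⟨⟨htS, hit⟩, hind⟩
      have := (indep_insert_iff G hit).1 hind
      exact ⟨⟨htS, this.2⟩, this.1⟩
    · rintro ⟨⟨htS, hdisj⟩, hind⟩
      have hit : i ∉ t := disjoint_right.1 hdisj (mem_Gp_self G i)
      exact ⟨⟨htS, hit⟩, (indep_insert_iff G hit).2 ⟨hind, hdisj⟩⟩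
  have hins : ∑ t ∈ (S.erase i).powerset, (if Indep G (insert i t) then
      (-1 : ℝ) ^ #(insert i t) * ∏ j ∈ insert i t, p j else 0) =
      -(p i * qb G p (S \ Gp G i)) := by
    rw [← sum_filter, hpow, qb, mul_sum, ← sum_neg_distrib]
    refine sum_congr rfl fun t ht => ?_
    have hit : i ∉ t := fun h =>
      (mem_sdiff.1 (mem_powerset.1 (mem_filter.1 ht).1 h)).2 (mem_Gp_self G i)
    rw [card_insert_of_notMem hit, prod_insert hit]
    ring
  conv_lhs => rw [qb, sum_filter, ← insert_erase hi, sum_powerset_insert (notMem_erase i S)]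
  rw [hins, sub_eq_add_neg, ← sum_filter]
  rfl

theorem qb_empty (p : Fin n → ℝ) : qb G p ∅ = 1 := by
  rw [qb, powerset_empty, filter_singleton, if_pos (by simp [Indep])]
  simp

end Shearer

theorem measureReal_biInter_compl_sub_le {Ω ι : Type*} [MeasurableSpace Ω] (μ : Measure Ω)
    [IsFiniteMeasure μ] [DecidableEq ι] (E : ι → Set Ω) {S N : Finset ι} {i : ι} {c : ℝ}
    (hi : i ∈ S) (hN : N ⊆ S.erase i)
    (hdep : 0 < μ.real (⋂ j ∈ N, (E j)ᶜ) →
      μ.real (E i ∩ ⋂ j ∈ N, (E j)ᶜ) / μ.real (⋂ j ∈ N, (E j)ᶜ) ≤ c) :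
    μ.real (⋂ j ∈ S.erase i, (E j)ᶜ) - c * μ.real (⋂ j ∈ N, (E j)ᶜ) ≤
      μ.real (⋂ j ∈ S, (E j)ᶜ) := by
  set X := ⋂ j ∈ S.erase i, (E j)ᶜ
  set Y := ⋂ j ∈ N, (E j)ᶜ
  have hS : ⋂ j ∈ S, (E j)ᶜ = (E i)ᶜ ∩ X := by
    conv_lhs => rw [← insert_erase hi, set_biInter_insert]
  have hXY : X ⊆ Y := fun x hx => Set.mem_iInter₂.2 fun j hj => Set.mem_iInter₂.1 hx j (hN hj)
  have hcond : μ.real (E i ∩ Y) ≤ c * μ.real Y := by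
    obtain h0 | hpos := (measureReal_nonneg (μ := μ) (s := Y)).eq_or_lt
    · rw [← h0, mul_zero]
      exact (measureReal_mono Set.inter_subset_right).trans h0.ge
    · exact (div_le_iff₀ hpos).1 (hdep hpos)
  have hsplit : μ.real X ≤ μ.real (E i ∩ X) + μ.real ((E i)ᶜ ∩ X) := by
    simpa [← Set.union_inter_distrib_right] using
      measureReal_union_le (μ := μ) (E i ∩ X) ((E i)ᶜ ∩ X)
  calc μ.real X - c * μ.real Y ≤ μ.real X - μ.real (E i ∩ X) := by
        gcongr
        exact (measureReal_mono (Set.inter_subset_inter_right _ hXY)).trans hcond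
    _ ≤ μ.real (⋂ j ∈ S, (E j)ᶜ) := by rw [hS]; linarith

theorem lopsided_shearer_general {Ω : Type*} [MeasurableSpace Ω] (μ : Measure Ω) [IsProbabilityMeasure μ]
    {n : ℕ} (G : SimpleGraph (Fin n)) [DecidableRel G.Adj]
    (E : Fin n → Set Ω) (p : Fin n → ℝ)
    (hp : ∀ i, p i ∈ Set.Icc (0 : ℝ) 1)
    (hdep : ∀ i, ∀ J : Finset (Fin n), J ⊆ Finset.univ \ Gp G i →
      0 < (μ (⋂ j ∈ J, (E j)ᶜ)).toReal →
      (μ (E i ∩ ⋂ j ∈ J, (E j)ᶜ)).toReal / (μ (⋂ j ∈ J, (E j)ᶜ)).toReal ≤ p i)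
    (hq : ∀ S : Finset (Fin n), 0 ≤ qb G p S) :
    ∀ A : Finset (Fin n), (μ (⋂ j ∈ A, (E j)ᶜ)).toReal ≥ qb G p A := by
  intro A
  have key := mul_le_mul_of_deletion_recurrence (qb G p) (fun S => μ.real (⋂ j ∈ S, (E j)ᶜ)) p
    (Gp G) (fun i => (hp i).1) (mem_Gp_self G) hq (fun _ => measureReal_nonneg)
    (fun _ _ hi => qb_eq_sub_mul_qb_sdiff_Gp G p hi)
    (fun S i hi => measureReal_biInter_compl_sub_le μ E hi
      (sdiff_subset_erase_of_mem (mem_Gp_self G i))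
      (hdep i _ (sdiff_subset_sdiff (subset_univ S) subset_rfl)))
    (empty_subset A)
  rw [ge_iff_le, ← measureReal_def]
  simpa [qb_empty] using key

theorem lopsided_shearer {Ω : Type*} [MeasurableSpace Ω] (μ : Measure Ω) [IsProbabilityMeasure μ]
    {n : ℕ} (G : SimpleGraph (Fin n)) [DecidableRel G.Adj]
    (E : Fin n → Set Ω) (hE : ∀ i, MeasurableSet (E i)) (p : Fin n → ℝ)
    (hp : ∀ i, p i ∈ Set.Icc (0 : ℝ) 1)
    (hdep : ∀ i, ∀ J : Finset (Fin n), J ⊆ Finset.univ \ Gp G i →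
      0 < (μ (⋂ j ∈ J, (E j)ᶜ)).toReal →
      (μ (E i ∩ ⋂ j ∈ J, (E j)ᶜ)).toReal / (μ (⋂ j ∈ J, (E j)ᶜ)).toReal ≤ p i)
    (hq : ∀ S : Finset (Fin n), 0 ≤ qb G p S) :
    ∀ A : Finset (Fin n), (μ (⋂ j ∈ A, (E j)ᶜ)).toReal ≥ qb G p A :=
  lopsided_shearer_general μ G E p hp hdep hq
end

section
/- (Cluster Expansion Lemma) Suppose events E_1,...,E_n and a graph G on [n] satisfy Pr[E_i | ∩_{j∈J} ¬E_j] ≤ p_i for all i and J ⊆ [n]∖Γ⁺(i), and there exist reals y_1,...,y_n > 0 such that p_i ≤ y_i / Y_{Γ⁺(i)} for each i, where Y_S = Σ_{I⊆S, I independent in G} ∏_{i∈I} y_i. Then Pr[∩_{i=1}^n ¬E_i] ≥ 1 / Y_{[n]} > 0. -/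
open Finset MeasureTheory

/-!
Write `P(S)` for the probability that no `E j` with `j ∈ S` occurs. The ratio `P(S) / Y_{Sᶜ}`
is monotone in `S`. Adding `i ∉ S` costs at most `Pr[E i ∩ A_S] ≤ p i · P(T)` with
`T = S ∖ Γ⁺(i)`; by induction `P(T)` is at most the ratio at `S` times
`Y_{Tᶜ} ≤ Y_{Γ⁺(i)} · Y_{Sᶜ ∖ Γ⁺(i)}`, and `p i · Y_{Γ⁺(i)} ≤ y i` together with the recursion
`Y_{Sᶜ} = Y_{Sᶜ ∖ {i}} + y i · Y_{Sᶜ ∖ Γ⁺(i)}` closes the step. Comparing `S = ∅` with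
`S = univ` gives `P(univ) ≥ 1 / Y_univ`.
-/

section IndependencePolynomial

variable {n : ℕ} (G : SimpleGraph (Fin n))

lemma indep_insert_iff_s7 {i : Fin n} {I : Finset (Fin n)} :
    Indep G (insert i I) ↔ Indep G I ∧ ∀ j ∈ I, ¬ G.Adj i j := by
  simp only [Indep, mem_insert, forall_eq_or_imp, SimpleGraph.irrefl, not_false_eq_true, true_and]
  constructor
  · exact fun h => ⟨fun a ha => (h.2 a ha).2, h.1⟩
  · exact fun h => ⟨h.2, fun a ha => ⟨fun hai => h.2 a ha hai.symm, h.1 a ha⟩⟩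

variable [DecidableRel G.Adj]

lemma self_mem_Gp (i : Fin n) : i ∈ Gp G i := mem_insert_self i _

lemma Yf_insert (y : Fin n → ℝ) {i : Fin n} {S : Finset (Fin n)} (hi : i ∉ S) :
    Yf G y (insert i S) = Yf G y S + y i * Yf G y (S \ Gp G i) := by
  have hfilter : S.powerset.filter (fun I => Indep G (insert i I)) =
      (S \ Gp G i).powerset.filter (fun I => Indep G I) := by
    ext I
    simp only [mem_filter, mem_powerset, indep_insert_iff_s7, subset_sdiff, Gp, disjoint_left,
      mem_insert, SimpleGraph.mem_neighborFinset, not_or]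
    constructor
    · rintro ⟨hIS, hI, hadj⟩
      exact ⟨⟨hIS, fun j hj => ⟨fun hji => hi (hji ▸ hIS hj), hadj j hj⟩⟩, hI⟩
    · rintro ⟨⟨hIS, hadj⟩, hI⟩
      exact ⟨hIS, hI, fun j hj => (hadj hj).2⟩
  rw [Yf, sum_filter, sum_powerset_insert hi, ← sum_filter, ← sum_filter, hfilter]
  congr 1
  rw [Yf, mul_sum]
  refine sum_congr rfl fun I hI => prod_insert fun hiI => ?_
  exact hi (sdiff_subset (mem_powerset.1 (mem_filter.1 hI).1 hiI))

variable {G} {y : Fin n → ℝ}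

lemma Yf_empty : Yf G y ∅ = 1 := by
  rw [Yf, powerset_empty, sum_filter]
  simp [Indep]

variable (hy : ∀ i, 0 ≤ y i)
include hy

lemma one_le_Yf (S : Finset (Fin n)) : 1 ≤ Yf G y S := by
  have hempty : ∅ ∈ S.powerset.filter (fun I => Indep G I) :=
    mem_filter.2 ⟨empty_mem_powerset S, fun i hi => absurd hi (notMem_empty i)⟩
  simpa [Yf] using single_le_sum (f := fun I => ∏ i ∈ I, y i)
    (fun I _ => prod_nonneg fun i _ => hy i) hempty

lemma Yf_pos (S : Finset (Fin n)) : 0 < Yf G y S :=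
  one_pos.trans_le (one_le_Yf hy S)

lemma Yf_mono {S T : Finset (Fin n)} (h : S ⊆ T) : Yf G y S ≤ Yf G y T :=
  sum_le_sum_of_subset_of_nonneg (filter_subset_filter _ (powerset_mono.2 h))
    fun _ _ _ => prod_nonneg fun i _ => hy i

lemma Yf_union_le_mul (A B : Finset (Fin n)) : Yf G y (A ∪ B) ≤ Yf G y A * Yf G y B := by
  induction B using Finset.strongInduction generalizing A with
  | H B ih =>
    rcases B.eq_empty_or_nonempty with rfl | ⟨b, hb⟩
    · simp [Yf_empty]
    have hB' : B.erase b ⊂ B := erase_ssubset hb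
    rw [← insert_erase hb, union_insert]
    by_cases hbA : b ∈ A ∪ B.erase b
    · rw [insert_eq_of_mem hbA]
      exact (ih _ hB' A).trans (mul_le_mul_of_nonneg_left (Yf_mono hy (subset_insert _ _))
        (Yf_pos hy A).le)
    · have hdiff : Yf G y ((A ∪ B.erase b) \ Gp G b)
          ≤ Yf G y A * Yf G y (B.erase b \ Gp G b) := by
        rw [union_sdiff_distrib]
        exact (ih _ (sdiff_subset.trans_ssubset hB') _).trans
          (mul_le_mul_of_nonneg_right (Yf_mono hy sdiff_subset) (Yf_pos hy _).le)
      rw [Yf_insert G y hbA, Yf_insert G y (notMem_erase b B)]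
      linarith [ih _ hB' A, mul_le_mul_of_nonneg_left hdiff (hy b)]

end IndependencePolynomial

theorem Finset.monotone_of_le_insert {α β : Type*} [DecidableEq α] [Preorder β]
    {φ : Finset α → β}
    (h : ∀ S i, i ∉ S → (∀ T ⊆ S, φ T ≤ φ S) → φ S ≤ φ (insert i S)) : Monotone φ := by
  suffices ∀ S, ∀ U ⊆ S, φ U ≤ φ S from fun U S hUS => this S U hUS
  intro S
  induction S using Finset.strongInduction with
  | H S ih =>
    intro U hU
    rcases hU.eq_or_ssubset with rfl | hUS
    · exact le_rfl
    obtain ⟨i, hiS, hiU⟩ := exists_of_ssubset hUS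
    have hS' : S.erase i ⊂ S := erase_ssubset hiS
    calc φ U ≤ φ (S.erase i) := ih _ hS' U (subset_erase.2 ⟨hU, hiU⟩)
      _ ≤ φ (insert i (S.erase i)) := h _ i (notMem_erase i S) (ih _ hS')
      _ = φ S := by rw [insert_erase hiS]

section Avoidance

variable {Ω ι : Type*} [MeasurableSpace Ω] (μ : Measure Ω) [IsFiniteMeasure μ]

def avoid (E : ι → Set Ω) (S : Finset ι) : Set Ω := ⋂ j ∈ S, (E j)ᶜ

lemma measureReal_inter_le_mul_of_cond_le {s t : Set Ω} {p : ℝ}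
    (h : 0 < μ.real t → μ.real (s ∩ t) / μ.real t ≤ p) : μ.real (s ∩ t) ≤ p * μ.real t := by
  rcases (measureReal_nonneg (μ := μ) (s := t)).eq_or_lt with ht | ht
  · rw [← ht, mul_zero]
    exact (measureReal_mono Set.inter_subset_right).trans ht.ge
  · exact (div_le_iff₀ ht).1 (h ht)

lemma measureReal_avoid_le [DecidableEq ι] (E : ι → Set Ω) (i : ι) (S : Finset ι) :
    μ.real (avoid E S) ≤ μ.real (E i ∩ avoid E S) + μ.real (avoid E (insert i S)) := by
  have hcover : avoid E S ⊆ (E i ∩ avoid E S) ∪ avoid E (insert i S) := by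
    intro ω hω
    by_cases hωi : ω ∈ E i
    · exact Or.inl ⟨hωi, hω⟩
    · refine Or.inr ?_
      rw [avoid, set_biInter_insert]
      exact ⟨hωi, hω⟩
  exact (measureReal_mono hcover).trans (measureReal_union_le _ _)

lemma measureReal_inter_avoid_antitone (E : ι → Set Ω) (s : Set Ω)
    {S T : Finset ι} (h : T ⊆ S) : μ.real (s ∩ avoid E S) ≤ μ.real (s ∩ avoid E T) :=
  measureReal_mono (Set.inter_subset_inter_right _ (Set.biInter_subset_biInter_left h))

end Avoidance

section Cluster

variable {Ω : Type*} [MeasurableSpace Ω] {μ : Measure Ω} [IsFiniteMeasure μ]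
  {n : ℕ} {G : SimpleGraph (Fin n)} [DecidableRel G.Adj] {E : Fin n → Set Ω} {p y : Fin n → ℝ}

lemma monotone_measureReal_avoid_div_Yf
    (hdep : ∀ i, ∀ J ⊆ univ \ Gp G i, μ.real (E i ∩ avoid E J) ≤ p i * μ.real (avoid E J))
    (hp : ∀ i, 0 ≤ p i) (hy : ∀ i, 0 ≤ y i) (hcl : ∀ i, p i * Yf G y (Gp G i) ≤ y i) :
    Monotone fun S => μ.real (avoid E S) / Yf G y Sᶜ := by
  refine Finset.monotone_of_le_insert fun S i hi hS => ?_
  set c := μ.real (avoid E S) / Yf G y Sᶜ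
  set T := S \ Gp G i
  have hTS : T ⊆ S := sdiff_subset
  have hc : 0 ≤ c := div_nonneg measureReal_nonneg (Yf_pos hy _).le
  have hPS : μ.real (avoid E S) = c * Yf G y Sᶜ := (div_mul_cancel₀ _ (Yf_pos hy _).ne').symm
  have hPT : μ.real (avoid E T) ≤ c * Yf G y Tᶜ := (div_le_iff₀ (Yf_pos hy _)).1 (hS T hTS)
  have hEi : μ.real (E i ∩ avoid E S) ≤ p i * μ.real (avoid E T) :=
    (measureReal_inter_avoid_antitone μ E (E i) hTS).trans
      (hdep i T fun j hj => mem_sdiff.2 ⟨mem_univ j, (mem_sdiff.1 hj).2⟩)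
  have hYS : Yf G y Sᶜ = Yf G y (insert i S)ᶜ + y i * Yf G y (Sᶜ \ Gp G i) := by
    have hdiff : Sᶜ.erase i \ Gp G i = Sᶜ \ Gp G i := by
      rw [erase_eq, sdiff_sdiff_left, sup_eq_right.2 (singleton_subset_iff.2 (self_mem_Gp G i))]
    rw [compl_insert, ← hdiff, ← Yf_insert G y (notMem_erase i _), insert_erase (mem_compl.2 hi)]
  have hYT : Yf G y Tᶜ ≤ Yf G y (Gp G i) * Yf G y (Sᶜ \ Gp G i) := by
    have : Tᶜ = Gp G i ∪ (Sᶜ \ Gp G i) := by ext; simp [T]; tauto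
    rw [this]
    exact Yf_union_le_mul hy _ _
  rw [le_div_iff₀ (Yf_pos hy _)]
  calc c * Yf G y (insert i S)ᶜ = c * Yf G y Sᶜ - c * (y i * Yf G y (Sᶜ \ Gp G i)) := by
        rw [hYS]; ring
    _ ≤ c * Yf G y Sᶜ - c * (p i * (Yf G y (Gp G i) * Yf G y (Sᶜ \ Gp G i))) := by
        rw [← mul_assoc (p i)]
        gcongr
        · exact (Yf_pos hy _).le
        · exact hcl i
    _ ≤ μ.real (avoid E S) - p i * μ.real (avoid E T) := by
        rw [hPS]
        linarith [mul_le_mul_of_nonneg_left hYT (mul_nonneg hc (hp i)),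
          mul_le_mul_of_nonneg_left hPT (hp i)]
    _ ≤ μ.real (avoid E (insert i S)) := by
        linarith [measureReal_avoid_le μ E i S]

end Cluster

theorem cluster_expansion_lemma_general {Ω : Type*} [MeasurableSpace Ω] (μ : Measure Ω) [IsProbabilityMeasure μ]
    {n : ℕ} (G : SimpleGraph (Fin n)) [DecidableRel G.Adj]
    (E : Fin n → Set Ω) (p : Fin n → ℝ)
    (hdep : ∀ i, ∀ J : Finset (Fin n), J ⊆ Finset.univ \ Gp G i →
      0 < (μ (⋂ j ∈ J, (E j)ᶜ)).toReal →
      (μ (E i ∩ ⋂ j ∈ J, (E j)ᶜ)).toReal / (μ (⋂ j ∈ J, (E j)ᶜ)).toReal ≤ p i)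
    (y : Fin n → ℝ) (hy : ∀ i, 0 < y i)
    (hcl : ∀ i, p i ≤ y i / Yf G y (Gp G i)) :
    (μ (⋂ i, (E i)ᶜ)).toReal ≥ 1 / Yf G y Finset.univ ∧
      0 < 1 / Yf G y Finset.univ := by
  have hy₀ : ∀ i, 0 ≤ y i := fun i => (hy i).le
  have hdep' : ∀ i, ∀ J ⊆ univ \ Gp G i,
      μ.real (E i ∩ avoid E J) ≤ p i * μ.real (avoid E J) := fun i J hJ =>
    measureReal_inter_le_mul_of_cond_le μ (hdep i J hJ)
  have hp : ∀ i, 0 ≤ p i := fun i => by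
    simpa [avoid] using measureReal_nonneg.trans (hdep' i ∅ (empty_subset _))
  have hcl' : ∀ i, p i * Yf G y (Gp G i) ≤ y i := fun i =>
    (le_div_iff₀ (Yf_pos hy₀ _)).1 (hcl i)
  have hmono := monotone_measureReal_avoid_div_Yf hdep' hp hy₀ hcl' (empty_subset univ)
  simp only [avoid, compl_empty, compl_univ, Yf_empty, div_one] at hmono
  refine ⟨?_, one_div_pos.2 (Yf_pos hy₀ univ)⟩
  simpa [measureReal_def] using hmono

theorem cluster_expansion_lemma {Ω : Type*} [MeasurableSpace Ω] (μ : Measure Ω) [IsProbabilityMeasure μ]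
    {n : ℕ} (G : SimpleGraph (Fin n)) [DecidableRel G.Adj]
    (E : Fin n → Set Ω) (hE : ∀ i, MeasurableSet (E i)) (p : Fin n → ℝ)
    (hdep : ∀ i, ∀ J : Finset (Fin n), J ⊆ Finset.univ \ Gp G i →
      0 < (μ (⋂ j ∈ J, (E j)ᶜ)).toReal →
      (μ (E i ∩ ⋂ j ∈ J, (E j)ᶜ)).toReal / (μ (⋂ j ∈ J, (E j)ᶜ)).toReal ≤ p i)
    (y : Fin n → ℝ) (hy : ∀ i, 0 < y i)
    (hcl : ∀ i, p i ≤ y i / Yf G y (Gp G i)) :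
    (μ (⋂ i, (E i)ᶜ)).toReal ≥ 1 / Yf G y Finset.univ ∧
      0 < 1 / Yf G y Finset.univ :=
  cluster_expansion_lemma_general μ G E p hdep y hy hcl
end

section
/- For every integer d ≥ 2, (d/(d−1))^{d−1} < e − 1/d. -/
/-!
Write `d / (d - 1) = 1 + 1 / n` with `n = d - 1`. The quadratic lower bound
`1 + t + t² / 2 ≤ exp t` at `t = (1 - 1 / (2 (n + 1))) / n` gives `1 + 1 / n ≤ exp t`, hence
`(1 + 1 / n) ^ n ≤ exp (1 - 1 / (2d))`. Finally `exp (1 - s) ≤ e / (1 + s) < e - 2 s` for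
`s = 1 / (2d)`, the last step because `2 + 2 s < e`.
-/

open Real

lemma one_add_inv_le_exp {x : ℝ} (hx : 0 < x) :
    1 + 1 / x ≤ exp ((1 - 1 / (2 * (x + 1))) / x) := by
  set t := (1 - 1 / (2 * (x + 1))) / x
  have ht : 0 ≤ t := by
    have : 1 / (2 * (x + 1)) ≤ 1 := by
      rw [div_le_one (by positivity)]; linarith
    exact div_nonneg (by linarith) hx.le
  -- `1 / x - t = 1 / (2 x (x + 1))`, and `t² / 2` exceeds it because `(2x + 1)² > 4x(x + 1)`.
  have hquad : 1 + 1 / x ≤ 1 + t + t ^ 2 / 2 := by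
    have hgap : 1 / x - t = 1 / (2 * x * (x + 1)) := by
      simp only [t]; field_simp; ring
    have hsq : t ^ 2 / 2 - 1 / (2 * x * (x + 1)) = 1 / (8 * x ^ 2 * (x + 1) ^ 2) := by
      simp only [t]; field_simp; ring
    have : 0 ≤ 1 / (8 * x ^ 2 * (x + 1) ^ 2) := by positivity
    linarith
  exact hquad.trans (quadratic_le_exp_of_nonneg ht)

lemma one_add_inv_pow_le_exp {n : ℕ} (hn : 0 < n) :
    (1 + 1 / (n : ℝ)) ^ n ≤ exp (1 - 1 / (2 * ((n : ℝ) + 1))) := by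
  have hn' : (0 : ℝ) < n := by exact_mod_cast hn
  calc (1 + 1 / (n : ℝ)) ^ n
      ≤ exp ((1 - 1 / (2 * ((n : ℝ) + 1))) / n) ^ n :=
        pow_le_pow_left₀ (by positivity) (one_add_inv_le_exp hn') n
    _ = exp (1 - 1 / (2 * ((n : ℝ) + 1))) := by
        rw [← exp_nat_mul, mul_div_cancel₀ _ hn'.ne']

lemma exp_one_sub_lt {s : ℝ} (hs : 0 < s) (he : 2 + 2 * s < exp 1) :
    exp (1 - s) < exp 1 - 2 * s := by
  have hs1 : 0 < 1 + s := by linarith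
  calc exp (1 - s) = exp 1 / exp s := exp_sub 1 s
    _ ≤ exp 1 / (1 + s) := by
        gcongr
        linarith [add_one_le_exp s]
    _ < exp 1 - 2 * s := by
        rw [div_lt_iff₀ hs1]
        nlinarith

theorem pow_bound (d : ℕ) (hd : 2 ≤ d) :
    ((d : ℝ) / ((d : ℝ) - 1)) ^ (d - 1) < Real.exp 1 - 1 / d := by
  obtain ⟨n, rfl⟩ : ∃ n, d = n + 1 := ⟨d - 1, by omega⟩
  have hn : 0 < n := by omega
  have hn' : (0 : ℝ) < n := by exact_mod_cast hn
  have hbase : ((n + 1 : ℕ) : ℝ) / (((n + 1 : ℕ) : ℝ) - 1) = 1 + 1 / (n : ℝ) := by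
    push_cast
    rw [add_sub_cancel_right, add_div, div_self hn'.ne']
  have hs : 2 + 2 * (1 / (2 * ((n : ℝ) + 1))) < exp 1 := by
    have : 1 / ((n : ℝ) + 1) ≤ 1 / 2 := by
      gcongr; exact_mod_cast Nat.succ_le_succ hn
    have h2s : 2 * (1 / (2 * ((n : ℝ) + 1))) = 1 / ((n : ℝ) + 1) := by field_simp
    linarith [exp_one_gt_d9]
  calc (((n + 1 : ℕ) : ℝ) / (((n + 1 : ℕ) : ℝ) - 1)) ^ (n + 1 - 1)
      = (1 + 1 / (n : ℝ)) ^ n := by rw [hbase, Nat.add_sub_cancel]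
    _ ≤ exp (1 - 1 / (2 * ((n : ℝ) + 1))) := one_add_inv_pow_le_exp hn
    _ < exp 1 - 2 * (1 / (2 * ((n : ℝ) + 1))) := exp_one_sub_lt (by positivity) hs
    _ = exp 1 - 1 / ((n + 1 : ℕ) : ℝ) := by push_cast; field_simp
end
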